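/- Let A, A_ε be n×n real matrices with the same characteristic polynomial, let 𝒟 and 𝒟_ε be the corresponding horizontal concatenations of adjugate-expansion coefficients, let ε_0, η_0 ∈ ℝ^n be vectors, and suppose 𝒟_ε(I_n ⊗ η_0) is invertible. Define S^ε := 𝒟(I_n ⊗ ε_0)·(𝒟_ε(I_n ⊗ η_0))^{-1}. Then A·S^ε = S^ε·A_ε. -/

import Mathlib

open Matrix Polynomial

/-- The `i`-th matrix coefficient `D_i` of the polynomial expansion
`adj(s I - M) = Σ_i D_i s^i`. -/
noncomputable def adjCoeff (n : ℕ) (M : Matrix (Fin n) (Fin n) ℝ) (i : ℕ) :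
    Matrix (Fin n) (Fin n) ℝ :=
  Matrix.of fun k l => (((charmatrix M).adjugate) k l).coeff i

/-- The horizontal concatenation `𝒟 = [D_0, D_1, …, D_{n-1}]` of the adjugate-expansion
coefficients, an `n × n²` matrix: column `(i, l)` is the `l`-th column of block `D_i`. -/
noncomputable def Dcat (n : ℕ) (M : Matrix (Fin n) (Fin n) ℝ) :
    Matrix (Fin n) (Fin n × Fin n) ℝ :=
  Matrix.of fun k p => (adjCoeff n M p.1) k p.2

/-- The `n² × n` matrix `I_n ⊗ v` for a column vector `v ∈ ℝ^n`
(block-diagonal stacking of the vector `v`). -/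
def kronIdVec (n : ℕ) (v : Fin n → ℝ) : Matrix (Fin n × Fin n) (Fin n) ℝ :=
  Matrix.of fun p j => if p.1 = j then v p.2 else 0

/-! Comparing coefficients in `(sI - M) adj(sI - M) = χ_M(s) I` gives `M D_j = D_{j-1} - a_j I`
(with `D_{-1} = 0`) and `D_{n-1} = I`. Applied to a vector `v`, this says
`M 𝒟^M(I_n ⊗ v) = 𝒟^M(I_n ⊗ v) A_s` with `A_s` the companion matrix of `χ_M`. As `A` and `A_ε`
share `χ`, `𝒟(I_n ⊗ ε_0)` and `𝒟_ε(I_n ⊗ η_0)` intertwine `A`, resp. `A_ε`, with the same `A_s`,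
hence their quotient `S^ε` intertwines `A` with `A_ε`. -/

section AdjugatePoly

variable {R : Type*} [CommRing R] {ι : Type*} [Fintype ι] [DecidableEq ι] (M : Matrix ι ι R)

noncomputable def adjPoly : (Matrix ι ι R)[X] :=
  matPolyEquiv (charmatrix M).adjugate

theorem X_sub_C_mul_adjPoly :
    (X - C M) * adjPoly M = M.charpoly.map (algebraMap R (Matrix ι ι R)) := by
  simpa only [adjPoly, charpoly, map_mul, matPolyEquiv_charmatrix, matPolyEquiv_smul_one] using
    congrArg matPolyEquiv (mul_adjugate (charmatrix M))

theorem mul_adjPoly_coeff_zero : M * (adjPoly M).coeff 0 = -M.charpoly.coeff 0 • 1 := by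
  have h := congrArg (coeff · 0) (X_sub_C_mul_adjPoly M)
  simp only [sub_mul, coeff_sub, coeff_X_mul_zero, coeff_C_mul, coeff_map,
    Algebra.algebraMap_eq_smul_one, zero_sub] at h
  rw [neg_smul, ← h, neg_neg]

theorem mul_adjPoly_coeff_succ (j : ℕ) :
    M * (adjPoly M).coeff (j + 1) = (adjPoly M).coeff j - M.charpoly.coeff (j + 1) • 1 := by
  have h := congrArg (coeff · (j + 1)) (X_sub_C_mul_adjPoly M)
  simp only [sub_mul, coeff_sub, coeff_X_mul, coeff_C_mul, coeff_map,
    Algebra.algebraMap_eq_smul_one] at h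
  rw [← h, sub_sub_cancel]

theorem adjPoly_monic : (adjPoly M).Monic :=
  (monic_X_sub_C M).of_mul_monic_left <| by
    rw [X_sub_C_mul_adjPoly]; exact M.charpoly_monic.map _

theorem adjPoly_coeff_card_sub_one [Nontrivial R] [Nonempty ι] :
    (adjPoly M).coeff (Fintype.card ι - 1) = 1 := by
  have h := (monic_X_sub_C M).natDegree_mul (adjPoly_monic M)
  rw [X_sub_C_mul_adjPoly, M.charpoly_monic.natDegree_map, charpoly_natDegree_eq_dim,
    natDegree_X_sub_C] at h
  rw [h, add_tsub_cancel_left]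
  exact adjPoly_monic M

end AdjugatePoly

section Companion

variable {R : Type*} [CommRing R]

def companion (n : ℕ) (p : R[X]) : Matrix (Fin n) (Fin n) R :=
  of fun i j => (if (i : ℕ) + 1 = j then 1 else 0) - (if (i : ℕ) = n - 1 then p.coeff j else 0)

variable {κ : Type*} {m : ℕ} (B : Matrix κ (Fin (m + 1)) R) (p : R[X]) (k : κ)

theorem Fin.val_eq_iff_eq_last (i : Fin (m + 1)) : (i : ℕ) = m ↔ i = Fin.last m := by
  simp [Fin.ext_iff]

theorem mul_companion_apply_zero :
    (B * companion (m + 1) p) k 0 = -(p.coeff 0 * B k (Fin.last m)) := by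
  simp [companion, mul_apply, Fin.val_eq_iff_eq_last, mul_comm]

theorem mul_companion_apply_succ (j : Fin m) :
    (B * companion (m + 1) p) k j.succ = B k j.castSucc - p.coeff (j + 1) * B k (Fin.last m) := by
  have hj (i : Fin (m + 1)) : (i : ℕ) = j ↔ i = j.castSucc := by simp [Fin.ext_iff]
  simp [companion, mul_apply, mul_sub, hj, Fin.val_eq_iff_eq_last, mul_comm]

end Companion

section Intertwining

variable {R : Type*} [CommRing R] {n : ℕ} (M : Matrix (Fin n) (Fin n) R) (v : Fin n → R)

noncomputable def adjVecs : Matrix (Fin n) (Fin n) R :=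
  of fun k j => ((adjPoly M).coeff j *ᵥ v) k

theorem mul_adjVecs_apply (k j : Fin n) :
    (M * adjVecs M v) k j = ((M * (adjPoly M).coeff j) *ᵥ v) k := by
  rw [← mulVec_mulVec]; rfl

theorem mul_adjVecs [Nontrivial R] : M * adjVecs M v = adjVecs M v * companion n M.charpoly := by
  obtain _ | m := n
  · exact Subsingleton.elim _ _
  have hlast : (adjPoly M).coeff m = 1 := by
    simpa using adjPoly_coeff_card_sub_one M
  ext k j
  rw [mul_adjVecs_apply]
  cases j using Fin.cases with
  | zero =>
    simp [mul_companion_apply_zero, mul_adjPoly_coeff_zero, adjVecs, hlast,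
      neg_mulVec, smul_mulVec, one_mulVec]
  | succ j =>
    simp [mul_companion_apply_succ, mul_adjPoly_coeff_succ, adjVecs, hlast,
      sub_mulVec, smul_mulVec, one_mulVec]

end Intertwining

theorem Dcat_mul_kronIdVec (n : ℕ) (M : Matrix (Fin n) (Fin n) ℝ) (v : Fin n → ℝ) :
    Dcat n M * kronIdVec n v = adjVecs M v := by
  ext k j
  simp [mul_apply, Dcat, kronIdVec, adjVecs, adjCoeff, adjPoly, Fintype.sum_prod_type, mulVec,
    dotProduct, matPolyEquiv_coeff_apply]

theorem mul_nonsing_inv_eq_nonsing_inv_mul_of_mul_eq {m : Type*} [Fintype m] [DecidableEq m]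
    {R : Type*} [CommRing R] {B C Y : Matrix m m R} (hY : IsUnit Y) (h : B * Y = Y * C) :
    C * Y⁻¹ = Y⁻¹ * B := by
  obtain ⟨u, rfl⟩ := hY
  rw [← coe_units_inv]
  exact (SemiconjBy.units_inv_symm_left h.symm).eq.symm

/-- If `A` and `A_ε` have the same characteristic polynomial and
`𝒟_ε (I_n ⊗ η_0)` is invertible, then
`S^ε := 𝒟 (I_n ⊗ ε_0) · (𝒟_ε (I_n ⊗ η_0))⁻¹` satisfies `A S^ε = S^ε A_ε`. -/
theorem intertwine_Seps (n : ℕ) (A Aeps : Matrix (Fin n) (Fin n) ℝ)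
    (hchar : A.charpoly = Aeps.charpoly)
    (eps0 eta0 : Fin n → ℝ)
    (hinv : IsUnit (Dcat n Aeps * kronIdVec n eta0)) :
    A * (Dcat n A * kronIdVec n eps0 * (Dcat n Aeps * kronIdVec n eta0)⁻¹) =
      (Dcat n A * kronIdVec n eps0 * (Dcat n Aeps * kronIdVec n eta0)⁻¹) * Aeps := by
  simp only [Dcat_mul_kronIdVec] at hinv ⊢
  have hA := mul_adjVecs A eps0
  rw [hchar] at hA
  calc A * (adjVecs A eps0 * (adjVecs Aeps eta0)⁻¹)
      = adjVecs A eps0 * (companion n Aeps.charpoly * (adjVecs Aeps eta0)⁻¹) := by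
        rw [← mul_assoc, hA, mul_assoc]
    _ = adjVecs A eps0 * (adjVecs Aeps eta0)⁻¹ * Aeps := by
        rw [mul_nonsing_inv_eq_nonsing_inv_mul_of_mul_eq hinv (mul_adjVecs Aeps eta0), mul_assoc]
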